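/- arXiv:1806.07631 — 3 statements merged into one kernel-verified Lean document; each statement's English description precedes it below -/
import Mathlib

section
/- Let n ≥ 1 be an integer and let ε > 0, θ > 0 be real numbers. Suppose f : {0,1,…,n} → ℝ is nonnegative, f(n) = 1, and f satisfies the eigenvalue equations of the birth-and-death chain which jumps from k to k+1 at rate ε and from k to k−1 at rate 1, namely ε·(f(1) − f(0)) = θ·f(0), and ε·(f(k+1) − f(k)) + (f(k−1) − f(k)) = θ·f(k) for all 1 ≤ k ≤ n−1. Then f(0) ≤ εⁿ/θ. -/
/-!
The weighted increments `ε ^ (k + 1) * (f (k + 1) - f k)` are nondecreasing in `k`: multiplying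
the eigenvalue equation at `k + 1` by `ε ^ (k + 1)` shows that each exceeds the previous one by
`θ * ε ^ (k + 1) * f (k + 1) ≥ 0`. The boundary equation at `0` says the first one is `θ * f 0`,
and the last one is `ε ^ n * (1 - f (n - 1)) ≤ ε ^ n`.
-/

def flux (ε : ℝ) (f : ℕ → ℝ) (k : ℕ) : ℝ := ε ^ (k + 1) * (f (k + 1) - f k)

lemma flux_succ_eq {ε θ : ℝ} {f : ℕ → ℝ} {k : ℕ}
    (h : ε * (f (k + 2) - f (k + 1)) + (f k - f (k + 1)) = θ * f (k + 1)) :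
    flux ε f (k + 1) = flux ε f k + θ * ε ^ (k + 1) * f (k + 1) := by
  unfold flux
  linear_combination ε ^ (k + 1) * h

lemma flux_zero_le {n : ℕ} {ε θ : ℝ} {f : ℕ → ℝ} (hε : 0 ≤ ε) (hθ : 0 ≤ θ)
    (hf : ∀ k, k < n → 0 ≤ f k)
    (hrec : ∀ k, k + 2 ≤ n →
      ε * (f (k + 2) - f (k + 1)) + (f k - f (k + 1)) = θ * f (k + 1)) :
    ∀ k, k + 1 ≤ n → flux ε f 0 ≤ flux ε f k := by
  intro k
  induction k with
  | zero => intro _; rfl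
  | succ k ih =>
    intro hk
    have hstep : 0 ≤ θ * ε ^ (k + 1) * f (k + 1) :=
      mul_nonneg (mul_nonneg hθ (pow_nonneg hε _)) (hf _ (by omega))
    rw [flux_succ_eq (hrec k hk)]
    linarith [ih (by omega)]

/-- Lemma 3.1: estimate for the Laplace transform of the hitting time of `n` for the
asymmetric birth-and-death chain jumping up at rate `ε` and down at rate `1`. -/
theorem stmt_0 (n : ℕ) (hn : 1 ≤ n) (ε θ : ℝ) (hε : 0 < ε) (hθ : 0 < θ)
    (f : ℕ → ℝ) (hf0 : ∀ k, k ≤ n → 0 ≤ f k) (hfn : f n = 1)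
    (hbd : ε * (f 1 - f 0) = θ * f 0)
    (hin : ∀ k, 1 ≤ k → k ≤ n - 1 →
      ε * (f (k + 1) - f k) + (f (k - 1) - f k) = θ * f k) :
    f 0 ≤ ε ^ n / θ := by
  obtain ⟨m, rfl⟩ : ∃ m, n = m + 1 := ⟨n - 1, by omega⟩
  have hrec : ∀ k, k + 2 ≤ m + 1 →
      ε * (f (k + 2) - f (k + 1)) + (f k - f (k + 1)) = θ * f (k + 1) := fun k hk => by
    simpa using hin (k + 1) (by omega) (by omega)
  have hmono := flux_zero_le hε.le hθ.le (fun k hk => hf0 k hk.le) hrec m le_rfl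
  have hfirst : flux ε f 0 = θ * f 0 := by simpa [flux] using hbd
  have hlast : flux ε f m ≤ ε ^ (m + 1) := by
    rw [flux, hfn]
    exact mul_le_of_le_one_right (pow_pos hε _).le (by linarith [hf0 m (by omega)])
  rw [le_div_iff₀ hθ]
  linarith
end

section
/- There exists a finite constant C₀, depending only on h, such that for all β ≥ C₀ and all integers L ≥ 2(n₀+2) with |Λ_L|·e^{−2β} ≤ 1/2, one has Σ_{σ ∈ V₋₁, σ ≠ -1} e^{−β(ℍ(σ) − ℍ(-1))} ≤ C₀·|Λ_L|·e^{−2β}; equivalently, μ_β(V₋₁ \ {-1}) / μ_β(-1) ≤ C₀·|Λ_L|·e^{−2β}, where μ_β is the Gibbs measure. -/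
open Classical Finset Filter Topology

noncomputable section

namespace BC

/-- Sites of the two-dimensional discrete torus of side `L`. -/
abbrev Site (L : ℕ) := ZMod L × ZMod L

/-- Spin configurations: a spin `s : Fin 3` at a site encodes the value `s - 1 ∈ {-1,0,1}`. -/
abbrev Cfg (L : ℕ) := Site L → Fin 3

/-- The spin value in `{-1, 0, 1}` encoded by an element of `Fin 3`. -/
def sval (s : Fin 3) : ℤ := (s : ℤ) - 1

/-- The critical length `n₀ = ⌊2/h⌋`. -/
def n0 (h : ℝ) : ℕ := ⌊(2 : ℝ) / h⌋₊

/-- The configuration `-1` with all spins equal to `-1`. -/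
def cminus (L : ℕ) : Cfg L := fun _ => 0

/-- The configuration `0` with all spins equal to `0`. -/
def czero (L : ℕ) : Cfg L := fun _ => 1

/-- The configuration `+1` with all spins equal to `+1`. -/
def cplus (L : ℕ) : Cfg L := fun _ => 2

/-- Nearest-neighbour relation on the torus. -/
def nbr (L : ℕ) (x y : Site L) : Prop :=
  y = x + (1, 0) ∨ y = x - (1, 0) ∨ y = x + (0, 1) ∨ y = x - (0, 1)

/-- The four nearest neighbours of a site, as a finite set. -/
def nbrFinset (L : ℕ) (x : Site L) : Finset (Site L) :=
  {x + (1, 0), x - (1, 0), x + (0, 1), x - (0, 1)}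

/-- The torus viewed as a simple graph with nearest-neighbour adjacency. -/
def torusGraph (L : ℕ) : SimpleGraph (Site L) where
  Adj x y := x ≠ y ∧ nbr L x y
  symm := by
    constructor
    rintro x y ⟨hne, hn⟩
    refine ⟨hne.symm, ?_⟩
    unfold nbr at hn ⊢
    rcases hn with h1 | h1 | h1 | h1 <;> subst h1 <;> simp
  loopless := by constructor; rintro x ⟨hne, -⟩; exact hne rfl

/-- The `s × t` rectangle of sites with lower-left corner `a`. -/
def rect (L : ℕ) (a : Site L) (s t : ℕ) : Finset (Site L) :=
  (Finset.range s ×ˢ Finset.range t).image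
    (fun p => (a.1 + (p.1 : ZMod L), a.2 + (p.2 : ZMod L)))

/-- The four corners of the `s × t` rectangle with lower-left corner `a`. -/
def corners (L : ℕ) (a : Site L) (s t : ℕ) : Finset (Site L) :=
  {(a.1, a.2), (a.1 + ((s - 1 : ℕ) : ZMod L), a.2),
   (a.1, a.2 + ((t - 1 : ℕ) : ZMod L)),
   (a.1 + ((s - 1 : ℕ) : ZMod L), a.2 + ((t - 1 : ℕ) : ZMod L))}

/-- `S` is an `n × (n+1)` rectangle (in either orientation). -/
def isCritRect (L n : ℕ) (S : Finset (Site L)) : Prop :=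
  ∃ a : Site L, S = rect L a n (n + 1) ∨ S = rect L a (n + 1) n

/-- `S` is an `n × (n+1)` rectangle plus an extra site attached to a longest side. -/
def critRl (L n : ℕ) (S : Finset (Site L)) : Prop :=
  ∃ (a : Site L) (i : ℕ), i ≤ n ∧
    (S = insert (a.1 + (i : ZMod L), a.2 - 1) (rect L a (n + 1) n) ∨
     S = insert (a.1 + (i : ZMod L), a.2 + (n : ZMod L)) (rect L a (n + 1) n) ∨
     S = insert (a.1 - 1, a.2 + (i : ZMod L)) (rect L a n (n + 1)) ∨
     S = insert (a.1 + (n : ZMod L), a.2 + (i : ZMod L)) (rect L a n (n + 1)))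

/-- `S` is an `n × (n+1)` rectangle plus an extra site attached to a longest side,
next to a corner of the rectangle. -/
def critRlc (L n : ℕ) (S : Finset (Site L)) : Prop :=
  ∃ (a : Site L) (i : ℕ), i ≤ n ∧ (i = 0 ∨ i = n) ∧
    (S = insert (a.1 + (i : ZMod L), a.2 - 1) (rect L a (n + 1) n) ∨
     S = insert (a.1 + (i : ZMod L), a.2 + (n : ZMod L)) (rect L a (n + 1) n) ∨
     S = insert (a.1 - 1, a.2 + (i : ZMod L)) (rect L a n (n + 1)) ∨
     S = insert (a.1 + (n : ZMod L), a.2 + (i : ZMod L)) (rect L a n (n + 1)))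

/-- `S` is an `n × (n+1)` rectangle plus an extra site attached to a longest side,
away from the corners of the rectangle. -/
def critRli (L n : ℕ) (S : Finset (Site L)) : Prop :=
  ∃ (a : Site L) (i : ℕ), 0 < i ∧ i < n ∧
    (S = insert (a.1 + (i : ZMod L), a.2 - 1) (rect L a (n + 1) n) ∨
     S = insert (a.1 + (i : ZMod L), a.2 + (n : ZMod L)) (rect L a (n + 1) n) ∨
     S = insert (a.1 - 1, a.2 + (i : ZMod L)) (rect L a n (n + 1)) ∨
     S = insert (a.1 + (n : ZMod L), a.2 + (i : ZMod L)) (rect L a n (n + 1)))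

/-- `S` is an `n × (n+1)` rectangle plus an extra site attached to a shortest side. -/
def critRs (L n : ℕ) (S : Finset (Site L)) : Prop :=
  ∃ (a : Site L) (j : ℕ), j < n ∧
    (S = insert (a.1 - 1, a.2 + (j : ZMod L)) (rect L a (n + 1) n) ∨
     S = insert (a.1 + ((n + 1 : ℕ) : ZMod L), a.2 + (j : ZMod L)) (rect L a (n + 1) n) ∨
     S = insert (a.1 + (j : ZMod L), a.2 - 1) (rect L a n (n + 1)) ∨
     S = insert (a.1 + (j : ZMod L), a.2 + ((n + 1 : ℕ) : ZMod L)) (rect L a n (n + 1)))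

/-- `S` is an `n × (n+1)` rectangle plus two mutually adjacent extra sites, each attached
to a longest side. -/
def critRl2 (L n : ℕ) (S : Finset (Site L)) : Prop :=
  ∃ (a : Site L) (i : ℕ), i + 1 ≤ n ∧
    (S = rect L a (n + 1) n ∪
        {(a.1 + (i : ZMod L), a.2 - 1), (a.1 + (i : ZMod L) + 1, a.2 - 1)} ∨
     S = rect L a (n + 1) n ∪
        {(a.1 + (i : ZMod L), a.2 + (n : ZMod L)), (a.1 + (i : ZMod L) + 1, a.2 + (n : ZMod L))} ∨
     S = rect L a n (n + 1) ∪
        {(a.1 - 1, a.2 + (i : ZMod L)), (a.1 - 1, a.2 + (i : ZMod L) + 1)} ∨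
     S = rect L a n (n + 1) ∪
        {(a.1 + (n : ZMod L), a.2 + (i : ZMod L)), (a.1 + (n : ZMod L), a.2 + (i : ZMod L) + 1)})

section

variable (L : ℕ) [NeZero L]

/-- The Blume-Capel Hamiltonian with zero chemical potential and magnetic field `h`. -/
def ham (h : ℝ) (σ : Cfg L) : ℝ :=
  (∑ x : Site L,
     (((sval (σ (x + (1, 0))) : ℝ) - (sval (σ x) : ℝ)) ^ 2 +
      ((sval (σ (x + (0, 1))) : ℝ) - (sval (σ x) : ℝ)) ^ 2)) -
  h * ∑ x : Site L, (sval (σ x) : ℝ)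

/-- The set `A(σ)` of sites where the spin differs from `-1`. -/
def Asites (σ : Cfg L) : Finset (Site L) := univ.filter fun x => σ x ≠ 0

/-- `N(σ)`, the number of spins different from `-1`. -/
def Nsz (σ : Cfg L) : ℕ := (Asites L σ).card

/-- The set of sites where the spin differs from `0`. -/
def A0sites (σ : Cfg L) : Finset (Site L) := univ.filter fun x => σ x ≠ 1

/-- `σ^{x,+}` : flip the spin at `x` by `+1 mod 3`. -/
def flipUp (σ : Cfg L) (x : Site L) : Cfg L := Function.update σ x (σ x + 1)

/-- `σ^{x,-}` : flip the spin at `x` by `-1 mod 3`. -/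
def flipDown (σ : Cfg L) (x : Site L) : Cfg L := Function.update σ x (σ x - 1)

/-- Metropolis jump rate. -/
def rate (h β : ℝ) (σ τ : Cfg L) : ℝ := Real.exp (-β * max (ham L h τ - ham L h σ) 0)

/-- Holding rate `λ_β`. -/
def lam (h β : ℝ) (σ : Cfg L) : ℝ :=
  ∑ x : Site L, (rate L h β σ (flipUp L σ x) + rate L h β σ (flipDown L σ x))

/-- One-step average of `u` under the jump probabilities `p_β = R_β/λ_β`. -/
def avg (h β : ℝ) (u : Cfg L → ℝ) (σ : Cfg L) : ℝ :=
  (∑ x : Site L,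
     (rate L h β σ (flipUp L σ x) * u (flipUp L σ x) +
      rate L h β σ (flipDown L σ x) * u (flipDown L σ x))) / lam L h β σ

/-- `u` is harmonic (w.r.t. the jump probabilities `p_β`) on `D`. -/
def harmOn (h β : ℝ) (u : Cfg L → ℝ) (D : Set (Cfg L)) : Prop :=
  ∀ η ∈ D, u η = avg L h β u η

/-- Unnormalised Gibbs weight `e^{-β ℍ(σ)}`. -/
def gw (h β : ℝ) (σ : Cfg L) : ℝ := Real.exp (-β * ham L h σ)

/-- Two configurations differ at exactly one site. -/
def oneDiff (σ τ : Cfg L) : Prop := (univ.filter fun x => σ x ≠ τ x).card = 1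

/-- Dirichlet form of the chain reflected in `V`. -/
def dirV (h β : ℝ) (V : Set (Cfg L)) (f : Cfg L → ℝ) : ℝ :=
  (1 / 2) * ∑ σ : Cfg L, ∑ τ : Cfg L,
    if σ ∈ V ∧ τ ∈ V ∧ oneDiff L σ τ
    then min (gw L h β σ) (gw L h β τ) * (f τ - f σ) ^ 2 else 0

/-- Capacity (via the Dirichlet principle) for the chain reflected in `V`. -/
def capV (h β : ℝ) (V A B : Set (Cfg L)) : ℝ :=
  sInf { e : ℝ | ∃ f : Cfg L → ℝ, (∀ σ, 0 ≤ f σ ∧ f σ ≤ 1) ∧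
        (∀ σ ∈ A, f σ = 1) ∧ (∀ σ ∈ B, f σ = 0) ∧ e = dirV L h β V f }

/-- Dirichlet form of the full chain. -/
def dirForm (h β : ℝ) (f : Cfg L → ℝ) : ℝ :=
  (1 / 2) * ∑ σ : Cfg L, ∑ x : Site L,
    (min (gw L h β σ) (gw L h β (flipUp L σ x)) * (f (flipUp L σ x) - f σ) ^ 2 +
     min (gw L h β σ) (gw L h β (flipDown L σ x)) * (f (flipDown L σ x) - f σ) ^ 2)

/-- Capacity via the Dirichlet variational principle. -/
def capa (h β : ℝ) (A B : Set (Cfg L)) : ℝ :=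
  sInf { e : ℝ | ∃ f : Cfg L → ℝ, (∀ σ, 0 ≤ f σ ∧ f σ ≤ 1) ∧
        (∀ σ ∈ A, f σ = 1) ∧ (∀ σ ∈ B, f σ = 0) ∧ e = dirForm L h β f }

/-- Holding rate of the chain reflected in `V`. -/
def lamV (h β : ℝ) (V : Set (Cfg L)) (σ : Cfg L) : ℝ :=
  ∑ x : Site L,
    ((if flipUp L σ x ∈ V then rate L h β σ (flipUp L σ x) else 0) +
     (if flipDown L σ x ∈ V then rate L h β σ (flipDown L σ x) else 0))

/-- One-step average for the chain reflected in `V`. -/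
def avgV (h β : ℝ) (V : Set (Cfg L)) (u : Cfg L → ℝ) (σ : Cfg L) : ℝ :=
  (∑ x : Site L,
    ((if flipUp L σ x ∈ V then rate L h β σ (flipUp L σ x) * u (flipUp L σ x) else 0) +
     (if flipDown L σ x ∈ V then rate L h β σ (flipDown L σ x) * u (flipDown L σ x) else 0))) /
  lamV L h β V σ

/-- `R` : `0`-spins forming an `n × (n+1)` rectangle in a sea of `-1`-spins. -/
def setR (n : ℕ) : Set (Cfg L) :=
  {σ | (∀ x, σ x ≠ 2) ∧ isCritRect L n (Asites L σ)}

/-- `B` : configurations with exactly `n(n+1)` spins different from `-1`. -/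
def setB (n : ℕ) : Set (Cfg L) := {σ | Nsz L σ = n * (n + 1)}

/-- `R⁺` : an `n × (n+1)` rectangle of `0`-spins plus one extra spin (`0` or `+1`)
outside the rectangle, in a sea of `-1`-spins. -/
def setRplus (n : ℕ) : Set (Cfg L) :=
  {σ | ∃ (S : Finset (Site L)) (z : Site L), isCritRect L n S ∧ z ∉ S ∧
       Asites L σ = insert z S ∧ ∀ x ∈ S, σ x = 1}

/-- `Rᵃ` : an `n × (n+1)` rectangle of `0`-spins plus one extra `0`-spin attached to the
rectangle, in a sea of `-1`-spins. -/
def setRa (n : ℕ) : Set (Cfg L) :=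
  {σ | ∃ (S : Finset (Site L)) (z : Site L), isCritRect L n S ∧ z ∉ S ∧
       Asites L σ = insert z S ∧ (∀ x ∈ S, σ x = 1) ∧ σ z = 1 ∧ ∃ y ∈ S, nbr L z y}

/-- The valley `V₋₁` of the configuration `-1`. -/
def valleyM (n : ℕ) : Set (Cfg L) := {σ | Nsz L σ ≤ n * (n + 1)} ∪ setRplus L n

/-- `B⁺`, the boundary of the valley of `-1`. -/
def setBplus (n : ℕ) : Set (Cfg L) := (setB L n \ setR L n) ∪ setRplus L n

/-- `Rˡ` : critical droplet with the protuberance attached to a longest side. -/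
def setRl (n : ℕ) : Set (Cfg L) :=
  {σ | (∀ x, σ x ≠ 2) ∧ critRl L n (Asites L σ) ∧ Nsz L σ = n * (n + 1) + 1}

/-- `Rˡᶜ` : protuberance attached to a longest side next to a corner. -/
def setRlc (n : ℕ) : Set (Cfg L) :=
  {σ | (∀ x, σ x ≠ 2) ∧ critRlc L n (Asites L σ) ∧ Nsz L σ = n * (n + 1) + 1}

/-- `Rˡⁱ` : protuberance attached to a longest side away from the corners. -/
def setRli (n : ℕ) : Set (Cfg L) :=
  {σ | (∀ x, σ x ≠ 2) ∧ critRli L n (Asites L σ) ∧ Nsz L σ = n * (n + 1) + 1}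

/-- `Rˢ` : protuberance attached to a shortest side. -/
def setRs (n : ℕ) : Set (Cfg L) :=
  {σ | (∀ x, σ x ≠ 2) ∧ critRs L n (Asites L σ) ∧ Nsz L σ = n * (n + 1) + 1}

/-- `Rˡ₀` : critical droplet of `+1`-spins in a sea of `0`-spins, protuberance on a
longest side. -/
def setRl0 (n : ℕ) : Set (Cfg L) :=
  {σ | (∀ x, σ x ≠ 0) ∧ critRl L n (A0sites L σ) ∧ (A0sites L σ).card = n * (n + 1) + 1}

/-- The energy `Γ_c` of a critical droplet. -/
def GammaC (h : ℝ) : ℝ :=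
  4 * ((n0 h : ℝ) + 1) - h * (((n0 h * (n0 h + 1) + 1 : ℕ) : ℝ) - (L : ℝ) ^ 2)

/-- `δ₁(β) = e^{-hβ} + |Λ|^{1/2} e^{-(2-h)β} + |Λ| e^{-(4-h)β}`. -/
def delta1 (h β : ℝ) : ℝ :=
  Real.exp (-h * β) + (L : ℝ) * Real.exp (-(2 - h) * β) +
    (L : ℝ) ^ 2 * Real.exp (-(4 - h) * β)

/-- `δ₅(β) = e^{-[(n₀+1)h-2]β} + e^{-hβ} + |Λ|^{3/2} e^{-(2-h)β}`. -/
def delta5 (h β : ℝ) : ℝ :=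
  Real.exp (-(((n0 h : ℝ) + 1) * h - 2) * β) + Real.exp (-h * β) +
    (L : ℝ) ^ 3 * Real.exp (-(2 - h) * β)

/-- `δ(β) = |Λ|^{1/2} e^{-[(n₀+1)h-2]β} + |Λ|^{1/2} e^{-hβ} + |Λ|² e^{-(2-h)β}`. -/
def deltaP (h β : ℝ) : ℝ :=
  (L : ℝ) * Real.exp (-(((n0 h : ℝ) + 1) * h - 2) * β) + (L : ℝ) * Real.exp (-h * β) +
    (L : ℝ) ^ 4 * Real.exp (-(2 - h) * β)

end

end BC

/-!
Every `σ ≠ -1` of the valley has `1 ≤ N(σ) ≤ K := n₀(n₀+1)+1`. Lowering to `-1` the spins of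
one nearest-neighbour cluster `C` of `A(σ)` releases at least `2 + δ`, `δ = 2/n₀ - h > 0`: on a
torus of side `L ≥ 2n₀+4` every set of at most `K` sites satisfies the isoperimetric inequality
`2(n₀ + |C|) ≤ n₀ · per(C)`, and the field gains at most `h` per lowered unit of spin. The map
sending `σ` to its root, its spins in the `(2K+1)`-box around the root and the lowered
configuration is injective, so the weights `W_k` of `{N ≤ k}` relative to `-1` satisfy
`W_{k+1} ≤ (1 + ε) W_k` with `ε = L² 3^{(2K+1)²} e^{-β(2+δ)}`, which is at most `|Λ| e^{-2β}` once
`β ≥ log 3^{(2K+1)²} / δ`. Iterating `K` times gives `W_K - 1 ≤ K 2^K |Λ| e^{-2β}`.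
-/

lemma ZMod.exists_mem_add_one_notMem {L : ℕ} [NeZero L] {T : Finset (ZMod L)}
    (hne : T.Nonempty) (hT : T ≠ univ) : ∃ a ∈ T, a + 1 ∉ T := by
  by_contra! hclosed
  obtain ⟨a, ha⟩ := hne
  have hshift : ∀ m : ℕ, a + m ∈ T := by
    intro m
    induction m with
    | zero => simpa using ha
    | succ m ih => simpa [add_assoc] using hclosed _ ih
  refine hT (eq_univ_of_forall fun t => ?_)
  obtain ⟨m, hm⟩ := ZMod.natCast_zmod_surjective (t - a)
  simpa [hm] using hshift m

lemma ZMod.two_le_card_xor_add_one {L : ℕ} [NeZero L] {T : Finset (ZMod L)}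
    (hne : T.Nonempty) (hT : T ≠ univ) : 2 ≤ #{r | Xor (r ∈ T) (r + 1 ∈ T)} := by
  obtain ⟨a, ha, ha'⟩ := exists_mem_add_one_notMem hne hT
  obtain ⟨b, hb, hb'⟩ := exists_mem_add_one_notMem (T := Tᶜ)
    ((compl_ne_univ_iff_nonempty _).1 (by rwa [compl_compl]))
    ((compl_ne_univ_iff_nonempty T).2 hne)
  rw [mem_compl] at hb
  rw [mem_compl, not_not] at hb'
  have hab : a ≠ b := by rintro rfl; exact hb ha
  calc 2 = #{a, b} := (card_pair hab).symm
    _ ≤ _ := by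
      refine card_le_card (insert_subset ?_ (singleton_subset_iff.2 ?_))
      · exact mem_filter.2 ⟨mem_univ _, Or.inl ⟨ha, ha'⟩⟩
      · exact mem_filter.2 ⟨mem_univ _, Or.inr ⟨hb', hb⟩⟩

lemma Finset.iterate_fixed_of_card_le {α : Type*} {f : Finset α → Finset α} {s A : Finset α}
    (hf : ∀ X, X ⊆ f X) (hA : ∀ k, f^[k] s ⊆ A) {k : ℕ} (hk : #A ≤ k) :
    f (f^[k] s) = f^[k] s := by
  have hgrow : ∀ m, f (f^[m] s) = f^[m] s ∨ m ≤ #(f^[m] s) := by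
    intro m
    induction m with
    | zero => exact Or.inr (Nat.zero_le _)
    | succ m ih =>
      rw [Function.iterate_succ_apply']
      by_cases hfix : f (f^[m] s) = f^[m] s
      · exact Or.inl (by rw [hfix, hfix])
      · have hlt := card_lt_card ((hf _).ssubset_of_ne (Ne.symm hfix))
        have hm := ih.resolve_left hfix
        exact Or.inr (by omega)
  by_contra hfix
  have hlt := card_lt_card ((hf _).ssubset_of_ne (Ne.symm hfix))
  have hle : #(f (f^[k] s)) ≤ #A :=
    card_le_card (by simpa [Function.iterate_succ_apply'] using hA (k + 1))
  have := (hgrow k).resolve_left hfix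
  omega

lemma Finset.sum_le_mul_card_mul_sum_of_injective {α D : Type*} [Fintype D] {s t : Finset α}
    {w : α → ℝ} (hw : ∀ a, 0 ≤ w a) {f : α → D × α} (hf : Function.Injective f) {c : ℝ}
    (hc : 0 ≤ c) (hle : ∀ a ∈ s, w a ≤ c * w (f a).2) (hmaps : ∀ a ∈ s, (f a).2 ∈ t) :
    ∑ a ∈ s, w a ≤ c * Fintype.card D * ∑ b ∈ t, w b := by
  calc ∑ a ∈ s, w a ≤ ∑ a ∈ s, c * w (f a).2 := sum_le_sum hle
    _ = c * ∑ y ∈ s.image f, w y.2 := by rw [sum_image hf.injOn, mul_sum]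
    _ ≤ c * ∑ y ∈ (univ : Finset D) ×ˢ t, w y.2 := by
      refine mul_le_mul_of_nonneg_left (sum_le_sum_of_subset_of_nonneg ?_ fun y _ _ => hw _) hc
      intro y hy
      obtain ⟨a, ha, rfl⟩ := mem_image.1 hy
      exact mem_product.2 ⟨mem_univ _, hmaps a ha⟩
    _ = c * Fintype.card D * ∑ b ∈ t, w b := by
      simp only [sum_product, sum_const, card_univ, nsmul_eq_mul, mul_assoc]

lemma Finset.sum_filter_le_succ {α : Type*} (s : Finset α) (g : α → ℕ) (w : α → ℝ) (k : ℕ) :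
    ∑ a ∈ s with g a ≤ k + 1, w a =
      ∑ a ∈ s with g a ≤ k, w a + ∑ a ∈ s with g a = k + 1, w a := by
  rw [sum_filter, sum_filter, sum_filter, ← sum_add_distrib]
  refine sum_congr rfl fun a _ => ?_
  split_ifs <;> first | (exfalso; omega) | simp

lemma le_one_add_mul_two_pow {t : ℕ → ℝ} {ε : ℝ} {K : ℕ} (hε0 : 0 ≤ ε) (hε1 : ε ≤ 1)
    (h0 : t 0 ≤ 1) (hsucc : ∀ k < K, t (k + 1) ≤ (1 + ε) * t k) :
    t K ≤ 1 + ε * K * 2 ^ K := by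
  suffices ∀ k ≤ K, t k ≤ 1 + ε * k * 2 ^ k from this K le_rfl
  intro k hk
  induction k with
  | zero => simpa using h0
  | succ k ih =>
    have ih := ih (by omega)
    have hpow : (1 : ℝ) ≤ 2 ^ k := one_le_pow₀ one_le_two
    calc t (k + 1) ≤ (1 + ε) * (1 + ε * k * 2 ^ k) :=
          (hsucc k (by omega)).trans (mul_le_mul_of_nonneg_left ih (by linarith))
      _ ≤ 1 + ε * ↑(k + 1) * 2 ^ (k + 1) := by
        push_cast
        rw [pow_succ]
        nlinarith [mul_nonneg (mul_nonneg hε0 (Nat.cast_nonneg k)) (zero_le_one.trans hpow)]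

lemma mul_exp_le_exp_of_log_le {M δ β : ℝ} (hM : 0 < M) (hMβ : Real.log M ≤ δ * β) :
    M * Real.exp (-β * (2 + δ)) ≤ Real.exp (-2 * β) := by
  rw [← Real.exp_log hM, ← Real.exp_add]
  exact Real.exp_le_exp.2 (by linarith)

lemma Nat.add_le_mul_add_of_le_mul {n m R C : ℕ} (hn : 1 ≤ n) (hm : 1 ≤ m) (hmRC : m ≤ R * C)
    (hmn : m ≤ n * (n + 1) + 1) : n + m ≤ n * (R + C) := by
  have hR : 1 ≤ R := Nat.pos_of_mul_pos_right (by omega : 0 < R * C)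
  have hC : 1 ≤ C := Nat.pos_of_mul_pos_left (by omega : 0 < R * C)
  rcases le_or_gt R n with hRn | hRn
  · nlinarith [Nat.mul_le_mul_right C hRn]
  rcases le_or_gt C n with hCn | hCn
  · nlinarith [Nat.mul_le_mul_left R hCn]
  nlinarith

lemma Nat.add_le_mul_sub_of_mul_le {n m l f : ℕ} (hn : 1 ≤ n) (hl : 2 * n + 4 ≤ l)
    (hfm : l * f ≤ m) (hmn : m ≤ n * (n + 1) + 1) : n + m ≤ n * (l - f) := by
  have hf : f ≤ n := by
    by_contra! hf
    nlinarith [Nat.mul_le_mul hl hf]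
  calc n + m ≤ n * (n + 4) := by nlinarith
    _ ≤ n * (l - f) := Nat.mul_le_mul_left n (by omega)

namespace BC

section Isoperimetry

variable {L : ℕ}

def transpose (S : Finset (Site L)) : Finset (Site L) := S.map (Equiv.prodComm _ _).toEmbedding

lemma mem_transpose {S : Finset (Site L)} {x : Site L} : x ∈ transpose S ↔ x.swap ∈ S :=
  mem_map_equiv

lemma card_transpose (S : Finset (Site L)) : #(transpose S) = #S := card_map _

variable [NeZero L]

def edgeBoundary (S : Finset (Site L)) (e : Site L) : ℕ := #{x | Xor (x ∈ S) (x + e ∈ S)}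

def perimeter (S : Finset (Site L)) : ℕ := edgeBoundary S (1, 0) + edgeBoundary S (0, 1)

def column (S : Finset (Site L)) (c : ZMod L) : Finset (ZMod L) := {r | (c, r) ∈ S}

def partialCols (S : Finset (Site L)) : Finset (ZMod L) :=
  {c | (column S c).Nonempty ∧ column S c ≠ univ}

variable (S : Finset (Site L))

lemma edgeBoundary_vertical_eq_sum :
    edgeBoundary S (0, 1) = ∑ c, #{r | Xor (r ∈ column S c) (r + 1 ∈ column S c)} := by
  rw [edgeBoundary, card_filter, Fintype.sum_prod_type]
  simp only [column, card_filter, mem_filter, mem_univ, true_and, Prod.mk_add_mk, add_zero]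

lemma two_mul_card_partialCols_le : 2 * #(partialCols S) ≤ edgeBoundary S (0, 1) := by
  rw [edgeBoundary_vertical_eq_sum, mul_comm, ← smul_eq_mul, ← sum_const]
  calc ∑ _c ∈ partialCols S, 2
      ≤ ∑ c ∈ partialCols S, #{r | Xor (r ∈ column S c) (r + 1 ∈ column S c)} :=
        sum_le_sum fun c hc =>
          ZMod.two_le_card_xor_add_one (mem_filter.1 hc).2.1 (mem_filter.1 hc).2.2
    _ ≤ _ := sum_le_sum_of_subset (subset_univ _)

lemma edgeBoundary_transpose (a b : ZMod L) :
    edgeBoundary (transpose S) (a, b) = edgeBoundary S (b, a) :=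
  card_nbij' Prod.swap Prod.swap (fun x hx => by simpa [mem_transpose, add_comm] using hx)
    (fun x hx => by simpa [mem_transpose] using hx) (fun x _ => x.swap_swap)
    (fun x _ => x.swap_swap)

lemma perimeter_transpose : perimeter (transpose S) = perimeter S := by
  simp only [perimeter, edgeBoundary_transpose, add_comm]

lemma two_mul_card_partialCols_add_le_perimeter :
    2 * (#(partialCols S) + #(partialCols (transpose S))) ≤ perimeter S := by
  have hcols := two_mul_card_partialCols_le S
  have hrows := two_mul_card_partialCols_le (transpose S)
  rw [edgeBoundary_transpose] at hrows
  rw [perimeter]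
  omega

lemma mul_card_full_columns_le : L * #{c | column S c = univ} ≤ #S := by
  have hsub : ({c | column S c = univ} : Finset (ZMod L)) ×ˢ (univ : Finset (ZMod L)) ⊆ S := by
    intro x hx
    have hfull := (mem_filter.1 (mem_product.1 hx).1).2
    simpa [column] using (Finset.ext_iff.1 hfull x.2).2 (mem_univ _)
  simpa [card_product, ZMod.card, mul_comm] using card_le_card hsub

lemma card_partialCols_of_full_row {r : ZMod L} (hrow : ∀ c, (c, r) ∈ S) :
    #(partialCols S) = L - #{c | column S c = univ} := by
  have : partialCols S = ({c | column S c = univ} : Finset (ZMod L))ᶜ := by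
    ext c
    simp only [partialCols, mem_filter, mem_univ, true_and, mem_compl, and_iff_right_iff_imp]
    exact fun _ => ⟨r, by simpa [column] using hrow c⟩
  rw [this, card_compl, ZMod.card]

lemma isoperimetric_of_full_row {n : ℕ} (hn : 1 ≤ n) (hL : 2 * n + 4 ≤ L)
    (hS : #S ≤ n * (n + 1) + 1) {r : ZMod L} (hrow : ∀ c, (c, r) ∈ S) :
    2 * (n + #S) ≤ n * perimeter S := by
  have hper := two_mul_card_partialCols_add_le_perimeter S
  rw [card_partialCols_of_full_row S hrow] at hper
  have key := Nat.add_le_mul_sub_of_mul_le hn hL (mul_card_full_columns_le S) hS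
  calc 2 * (n + #S) ≤ n * (2 * (L - #{c | column S c = univ})) := by nlinarith
    _ ≤ n * perimeter S := Nat.mul_le_mul_left n (by omega)

theorem isoperimetric {n : ℕ} (hn : 1 ≤ n) (hL : 2 * n + 4 ≤ L) (hne : S.Nonempty)
    (hS : #S ≤ n * (n + 1) + 1) : 2 * (n + #S) ≤ n * perimeter S := by
  by_cases hrow : ∃ r, ∀ c, (c, r) ∈ S
  · exact isoperimetric_of_full_row S hn hL hS hrow.choose_spec
  by_cases hcol : ∃ c, ∀ r, (c, r) ∈ S
  · obtain ⟨c, hc⟩ := hcol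
    simpa [perimeter_transpose, card_transpose] using
      isoperimetric_of_full_row (transpose S) hn hL (by rwa [card_transpose])
        (r := c) fun r => mem_transpose.2 (hc r)
  push Not at hrow hcol
  -- `partialCols (transpose S)` are the rows of `S` that are neither empty nor full
  have hsub : S ⊆ partialCols S ×ˢ partialCols (transpose S) := by
    intro x hx
    obtain ⟨r, hr⟩ := hcol x.1
    obtain ⟨c, hc⟩ := hrow x.2
    refine mem_product.2 ⟨mem_filter.2 ⟨mem_univ _, ⟨x.2, ?_⟩, ?_⟩,
      mem_filter.2 ⟨mem_univ _, ⟨x.1, ?_⟩, ?_⟩⟩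
    · simpa [column] using hx
    · exact fun h => hr (by simpa [column] using (Finset.ext_iff.1 h r).2 (mem_univ _))
    · simpa [column, mem_transpose] using hx
    · exact fun h => hc (by
        simpa [column, mem_transpose] using (Finset.ext_iff.1 h c).2 (mem_univ _))
  have hprod := (card_le_card hsub).trans_eq (card_product _ _)
  have key := Nat.add_le_mul_add_of_le_mul hn (card_pos.2 hne) hprod hS
  have hper := two_mul_card_partialCols_add_le_perimeter S
  nlinarith

end Isoperimetry

section Cluster

variable {L : ℕ} [NeZero L] (σ : Cfg L)

omit [NeZero L] in
lemma exists_offset_of_mem_nbrFinset {x y : Site L} (hy : y ∈ nbrFinset L x) :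
    ∃ a b : ℤ, a.natAbs ≤ 1 ∧ b.natAbs ≤ 1 ∧ y = x + ((a : ZMod L), (b : ZMod L)) := by
  simp only [nbrFinset, mem_insert, mem_singleton] at hy
  rcases hy with rfl | rfl | rfl | rfl
  · exact ⟨1, 0, by simp, by simp, by simp⟩
  · exact ⟨-1, 0, by simp, by simp, by simp [sub_eq_add_neg]⟩
  · exact ⟨0, 1, by simp, by simp, by simp⟩
  · exact ⟨0, -1, by simp, by simp, by simp [sub_eq_add_neg]⟩

def root : Site L := if h : (Asites L σ).Nonempty then h.choose else 0

def grow (X : Finset (Site L)) : Finset (Site L) :=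
  X ∪ {y ∈ Asites L σ | ∃ x ∈ X, y ∈ nbrFinset L x}

def cluster (k : ℕ) : Finset (Site L) := (grow σ)^[k] {root σ}

def clearOn (C : Finset (Site L)) : Cfg L := fun x => if x ∈ C then 0 else σ x

lemma root_mem_asites (h : (Asites L σ).Nonempty) : root σ ∈ Asites L σ := by
  rw [root, dif_pos h]
  exact h.choose_spec

lemma cluster_succ (k : ℕ) : cluster σ (k + 1) = grow σ (cluster σ k) :=
  Function.iterate_succ_apply' _ _ _

lemma root_mem_cluster (k : ℕ) : root σ ∈ cluster σ k := by
  induction k with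
  | zero => exact mem_singleton_self _
  | succ k ih => exact cluster_succ σ k ▸ mem_union_left _ ih

lemma cluster_subset_asites (h : (Asites L σ).Nonempty) (k : ℕ) :
    cluster σ k ⊆ Asites L σ := by
  induction k with
  | zero => exact singleton_subset_iff.2 (root_mem_asites σ h)
  | succ k ih => exact cluster_succ σ k ▸ union_subset ih (filter_subset _ _)

lemma mem_cluster_of_mem_nbrFinset (h : (Asites L σ).Nonempty) {k : ℕ}
    (hk : #(Asites L σ) ≤ k) {x y : Site L} (hx : x ∈ cluster σ k) (hy : y ∈ nbrFinset L x)
    (hσy : σ y ≠ 0) : y ∈ cluster σ k := by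
  have hfix : grow σ (cluster σ k) = cluster σ k :=
    Finset.iterate_fixed_of_card_le (fun _ => subset_union_left) (cluster_subset_asites σ h) hk
  rw [← hfix]
  exact mem_union_right _ (mem_filter.2 ⟨by simpa [Asites] using hσy, x, hx, hy⟩)

lemma exists_offset_of_mem_cluster {k : ℕ} {x : Site L} (hx : x ∈ cluster σ k) :
    ∃ i j : ℤ, i.natAbs ≤ k ∧ j.natAbs ≤ k ∧
      x = root σ + ((i : ZMod L), (j : ZMod L)) := by
  induction k generalizing x with
  | zero => exact ⟨0, 0, le_rfl, le_rfl, by rw [mem_singleton.1 hx]; ext <;> simp⟩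
  | succ k ih =>
    rcases mem_union.1 (cluster_succ σ k ▸ hx) with hx | hx
    · obtain ⟨i, j, hi, hj, rfl⟩ := ih hx
      exact ⟨i, j, by omega, by omega, rfl⟩
    · obtain ⟨-, z, hz, hxz⟩ := mem_filter.1 hx
      obtain ⟨i, j, hi, hj, rfl⟩ := ih hz
      obtain ⟨a, b, ha, hb, rfl⟩ := exists_offset_of_mem_nbrFinset hxz
      refine ⟨i + a, j + b, by omega, by omega, ?_⟩
      ext <;> simp [add_assoc]

def boxSite (r : Site L) (k : ℕ) (p : Fin (2 * k + 1) × Fin (2 * k + 1)) : Site L :=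
  r + (((((p.1 : ℕ) : ℤ) - k : ℤ) : ZMod L), ((((p.2 : ℕ) : ℤ) - k : ℤ) : ZMod L))

lemma exists_boxSite_eq_of_mem_cluster {k : ℕ} {x : Site L} (hx : x ∈ cluster σ k) :
    ∃ p, boxSite (root σ) k p = x := by
  obtain ⟨i, j, hi, hj, rfl⟩ := exists_offset_of_mem_cluster σ hx
  refine ⟨(⟨(i + k).toNat, by omega⟩, ⟨(j + k).toNat, by omega⟩), ?_⟩
  simp only [boxSite]
  rw [Int.toNat_of_nonneg (by omega), Int.toNat_of_nonneg (by omega)]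
  simp

def encode (k : ℕ) (σ : Cfg L) :
    (Site L × (Fin (2 * k + 1) × Fin (2 * k + 1) → Fin 3)) × Cfg L :=
  ((root σ, fun p => σ (boxSite (root σ) k p)), clearOn σ (cluster σ k))

lemma encode_injective (k : ℕ) : Function.Injective (encode (L := L) k) := by
  intro σ τ h
  simp only [encode, Prod.mk.injEq] at h
  obtain ⟨⟨hroot, hbox⟩, hclear⟩ := h
  funext x
  by_cases hx : ∃ p, boxSite (root σ) k p = x
  · obtain ⟨p, rfl⟩ := hx
    simpa [hroot] using congrFun hbox p
  · have hσ : x ∉ cluster σ k := fun h => hx (exists_boxSite_eq_of_mem_cluster σ h)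
    have hτ : x ∉ cluster τ k := fun h => hx (hroot ▸ exists_boxSite_eq_of_mem_cluster τ h)
    simpa [clearOn, hσ, hτ] using congrFun hclear x

end Cluster

section Energy

variable {L : ℕ} [NeZero L]

def bondEnergy (σ : Cfg L) (x y : Site L) : ℝ := ((sval (σ y) : ℝ) - sval (σ x)) ^ 2

lemma ham_eq (h : ℝ) (σ : Cfg L) :
    ham L h σ = ∑ x, (bondEnergy σ x (x + (1, 0)) + bondEnergy σ x (x + (0, 1))) -
      h * ∑ x, (sval (σ x) : ℝ) := rfl

lemma asites_clearOn (σ : Cfg L) (C : Finset (Site L)) :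
    Asites L (clearOn σ C) = Asites L σ \ C := by
  ext x
  by_cases hx : x ∈ C <;> simp [Asites, clearOn, hx]

/-- `p`, `q` stand for `x ∈ C`, `y ∈ C` and `a`, `b` for the spins at `x`, `y`, for a set `C`
of non-`(-1)` spins that is closed under taking non-`(-1)` neighbours. -/
lemma bond_drop (a b : Fin 3) (p q : Prop) [Decidable p] [Decidable q] (ha : p → a ≠ 0)
    (hb : q → b ≠ 0) (hpq : p → ¬q → b = 0) (hqp : q → ¬p → a = 0) :
    (if Xor p q then 1 else 0) + (if Xor (p ∧ a = 2) (q ∧ b = 2) then 1 else 0) ≤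
      ((sval b : ℝ) - sval a) ^ 2 -
        ((sval (if q then 0 else b) : ℝ) - sval (if p then 0 else a)) ^ 2 := by
  by_cases hp : p <;> by_cases hq : q <;> fin_cases a <;> fin_cases b <;>
    simp_all [sval, Xor] <;> norm_num

lemma perimeter_eq_sum (S : Finset (Site L)) :
    (perimeter S : ℝ) = ∑ x, ((if Xor (x ∈ S) (x + (1, 0) ∈ S) then 1 else 0) +
      if Xor (x ∈ S) (x + (0, 1) ∈ S) then 1 else 0) := by
  rw [perimeter, edgeBoundary, edgeBoundary, card_filter, card_filter, sum_add_distrib]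
  push_cast
  rfl

variable (σ : Cfg L) {C : Finset (Site L)} (hC : C ⊆ Asites L σ)
include hC

lemma perimeter_add_perimeter_le_sum_bondEnergy_sub
    (hclosed : ∀ x ∈ C, ∀ y ∈ nbrFinset L x, σ y ≠ 0 → y ∈ C) :
    (perimeter C : ℝ) + perimeter {x ∈ C | σ x = 2} ≤
      ∑ x, (bondEnergy σ x (x + (1, 0)) + bondEnergy σ x (x + (0, 1))) -
        ∑ x, (bondEnergy (clearOn σ C) x (x + (1, 0)) +
          bondEnergy (clearOn σ C) x (x + (0, 1))) := by
  have hbond : ∀ x, ∀ y ∈ nbrFinset L x, x ∈ nbrFinset L y →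
      (if Xor (x ∈ C) (y ∈ C) then 1 else 0) +
        (if Xor (x ∈ {x ∈ C | σ x = 2}) (y ∈ {x ∈ C | σ x = 2}) then 1 else 0) ≤
      bondEnergy σ x y - bondEnergy (clearOn σ C) x y := by
    intro x y hxy hyx
    simp only [mem_filter]
    have hA : ∀ z ∈ C, σ z ≠ 0 := fun z hz => by simpa [Asites] using hC hz
    exact bond_drop _ _ _ _ (hA x) (hA y)
      (fun hx hy => by_contra fun h0 => hy (hclosed x hx y hxy h0))
      (fun hy hx => by_contra fun h0 => hx (hclosed y hy x hyx h0))
  rw [perimeter_eq_sum, perimeter_eq_sum, ← sum_add_distrib, ← sum_sub_distrib]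
  refine sum_le_sum fun x _ => ?_
  have h1 := hbond x (x + (1, 0)) (by simp [nbrFinset]) (by simp [nbrFinset])
  have h2 := hbond x (x + (0, 1)) (by simp [nbrFinset]) (by simp [nbrFinset])
  linarith

lemma sum_sval_sub_sum_sval_clearOn :
    ∑ x, (sval (σ x) : ℝ) - ∑ x, (sval (clearOn σ C x) : ℝ) =
      #C + #{x ∈ C | σ x = 2} := by
  have hsite : ∀ x, (sval (σ x) : ℝ) - sval (clearOn σ C x) =
      (if x ∈ C then 1 else 0) + if x ∈ {x ∈ C | σ x = 2} then 1 else 0 := by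
    intro x
    by_cases hx : x ∈ C
    · have hσx : σ x ≠ 0 := by simpa [Asites] using hC hx
      simp only [clearOn, mem_filter, hx, if_true, true_and]
      generalize σ x = a at hσx ⊢
      fin_cases a <;> simp_all [sval]
    · simp [clearOn, hx]
  rw [← sum_sub_distrib, sum_congr rfl fun x _ => hsite x, sum_add_distrib, sum_boole,
    sum_boole]
  simp only [filter_mem_eq_inter, univ_inter]

lemma perimeter_sub_le_ham_sub_ham_clearOn (h : ℝ)
    (hclosed : ∀ x ∈ C, ∀ y ∈ nbrFinset L x, σ y ≠ 0 → y ∈ C) :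
    (perimeter C : ℝ) + perimeter {x ∈ C | σ x = 2} - h * (#C + #{x ∈ C | σ x = 2}) ≤
      ham L h σ - ham L h (clearOn σ C) := by
  have hedges := perimeter_add_perimeter_le_sum_bondEnergy_sub σ hC hclosed
  have hfield := congrArg (h * ·) (sum_sval_sub_sum_sval_clearOn σ hC)
  simp only [mul_sub] at hfield
  rw [ham_eq, ham_eq]
  linarith

omit hC

/-- The isoperimetric inequality gives `per C ≥ 2 + 2|C|/n` for the cluster `C` and
`per P ≥ h|P|` for its `+1`-spins `P`. -/
lemma two_add_le_ham_sub_ham_clearOn_cluster {h : ℝ} {n : ℕ} (hn : 1 ≤ n) (hhn : h * n < 2)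
    (hL : 2 * n + 4 ≤ L) (hne : (Asites L σ).Nonempty) (hN : Nsz L σ ≤ n * (n + 1) + 1) :
    2 + (2 / n - h) ≤ ham L h σ - ham L h (clearOn σ (cluster σ (n * (n + 1) + 1))) := by
  set C := cluster σ (n * (n + 1) + 1)
  set P := {x ∈ C | σ x = 2}
  have hCA : C ⊆ Asites L σ := cluster_subset_asites σ hne _
  have hC : #C ≤ n * (n + 1) + 1 := (card_le_card hCA).trans hN
  have hCpos : (1 : ℝ) ≤ #C := by exact_mod_cast card_pos.2 ⟨_, root_mem_cluster σ _⟩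
  have hn' : (0 : ℝ) < n := by exact_mod_cast hn
  have hisoC : (2 * (n + #C) : ℝ) ≤ n * perimeter C := by
    exact_mod_cast isoperimetric C hn hL ⟨_, root_mem_cluster σ _⟩ hC
  have hisoP : (h * n * #P : ℝ) ≤ n * perimeter P := by
    rcases P.eq_empty_or_nonempty with hP | hP
    · simp only [hP, card_empty, Nat.cast_zero, mul_zero]
      positivity
    have := isoperimetric P hn hL hP ((card_le_card (filter_subset _ _)).trans hC)
    have hP' : (2 * (n + #P) : ℝ) ≤ n * perimeter P := by exact_mod_cast this
    nlinarith
  have henergy := perimeter_sub_le_ham_sub_ham_clearOn σ hCA h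
    fun x hx y hy hσy => mem_cluster_of_mem_nbrFinset σ hne hN hx hy hσy
  have hexpand : (n : ℝ) * (2 + (2 / n - h)) = 2 * n + (2 - h * n) := by
    field_simp
  refine le_of_mul_le_mul_left ?_ hn'
  rw [hexpand]
  nlinarith

end Energy

section Weights

variable {L : ℕ} [NeZero L]

def relWeight (h β : ℝ) (σ : Cfg L) : ℝ := Real.exp (-β * (ham L h σ - ham L h (cminus L)))

lemma relWeight_le_of_le_ham_sub {h β E : ℝ} (hβ : 0 ≤ β) {σ τ : Cfg L}
    (hE : E ≤ ham L h σ - ham L h τ) :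
    relWeight h β σ ≤ Real.exp (-β * E) * relWeight h β τ := by
  rw [relWeight, relWeight, ← Real.exp_add]
  exact Real.exp_le_exp.2 (by nlinarith)

lemma nsz_eq_zero_iff (σ : Cfg L) : Nsz L σ = 0 ↔ σ = cminus L := by
  simp [Nsz, Asites, filter_eq_empty_iff, funext_iff, cminus]

lemma nsz_clearOn_cluster_lt (σ : Cfg L) (hne : (Asites L σ).Nonempty) (k : ℕ) :
    Nsz L (clearOn σ (cluster σ k)) < Nsz L σ := by
  rw [Nsz, Nsz, asites_clearOn]
  exact card_lt_card (sdiff_ssubset (cluster_subset_asites σ hne k)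
    ⟨_, root_mem_cluster σ k⟩)

lemma card_encode_codomain (k : ℕ) :
    Fintype.card (Site L × (Fin (2 * k + 1) × Fin (2 * k + 1) → Fin 3)) =
      L ^ 2 * 3 ^ ((2 * k + 1) ^ 2) := by
  simp [Fintype.card_prod, ZMod.card, sq]

lemma sum_nsz_eq_succ_le {h β ε : ℝ} {n : ℕ} (hn : 1 ≤ n) (hhn : h * n < 2)
    (hL : 2 * n + 4 ≤ L) (hβ : 0 ≤ β)
    (hε : (L : ℝ) ^ 2 * 3 ^ ((2 * (n * (n + 1) + 1) + 1) ^ 2) *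
      Real.exp (-β * (2 + (2 / n - h))) ≤ ε)
    {k : ℕ} (hk : k + 1 ≤ n * (n + 1) + 1) :
    ∑ σ : Cfg L with Nsz L σ = k + 1, relWeight h β σ ≤
      ε * ∑ σ : Cfg L with Nsz L σ ≤ k, relWeight h β σ := by
  have hne : ∀ σ ∈ ({σ | Nsz L σ = k + 1} : Finset (Cfg L)), (Asites L σ).Nonempty :=
    fun σ hσ => card_pos.1 (by simp only [mem_filter] at hσ; rw [← Nsz, hσ.2]; omega)
  have hbound := sum_le_mul_card_mul_sum_of_injective (s := {σ | Nsz L σ = k + 1})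
    (t := {σ | Nsz L σ ≤ k}) (fun σ => (Real.exp_pos _).le) (encode_injective _)
    (Real.exp_pos _).le
    (fun σ hσ => relWeight_le_of_le_ham_sub hβ
      (two_add_le_ham_sub_ham_clearOn_cluster σ hn hhn hL (hne σ hσ)
        (by simp only [mem_filter] at hσ; omega)))
    (fun σ hσ => by
      have := nsz_clearOn_cluster_lt σ (hne σ hσ) (n * (n + 1) + 1)
      simp only [mem_filter, encode] at hσ ⊢
      exact ⟨mem_univ _, by omega⟩)
  rw [card_encode_codomain] at hbound
  refine hbound.trans
    (mul_le_mul_of_nonneg_right ?_ (sum_nonneg fun σ _ => (Real.exp_pos _).le))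
  push_cast
  linarith

theorem sum_relWeight_le {h β ε : ℝ} {n : ℕ} (hn : 1 ≤ n) (hhn : h * n < 2)
    (hL : 2 * n + 4 ≤ L) (hβ : 0 ≤ β)
    (hε : (L : ℝ) ^ 2 * 3 ^ ((2 * (n * (n + 1) + 1) + 1) ^ 2) *
      Real.exp (-β * (2 + (2 / n - h))) ≤ ε) (hε1 : ε ≤ 1) :
    ∑ σ : Cfg L with σ ≠ cminus L ∧ Nsz L σ ≤ n * (n + 1) + 1, relWeight h β σ ≤
      ε * (n * (n + 1) + 1 : ℕ) * 2 ^ (n * (n + 1) + 1) := by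
  set t : ℕ → ℝ := fun k => ∑ σ : Cfg L with Nsz L σ ≤ k, relWeight h β σ
  have ht0 : t 0 = 1 := by
    have : ({σ | Nsz L σ ≤ 0} : Finset (Cfg L)) = {cminus L} := by
      ext σ
      simp [nsz_eq_zero_iff]
    simp only [t]
    rw [this, sum_singleton]
    simp [relWeight]
  have htK : t (n * (n + 1) + 1) = 1 +
      ∑ σ : Cfg L with σ ≠ cminus L ∧ Nsz L σ ≤ n * (n + 1) + 1, relWeight h β σ := by
    have hmem : cminus L ∈ ({σ | Nsz L σ ≤ n * (n + 1) + 1} : Finset (Cfg L)) := by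
      simp [(nsz_eq_zero_iff _).2 rfl]
    simp only [t]
    rw [← add_sum_erase _ _ hmem]
    congr 1
    · simp [relWeight]
    · congr 1
      ext σ
      simp [and_comm]
  have hε0 : 0 ≤ ε := le_trans (by positivity) hε
  have := le_one_add_mul_two_pow (t := t) (K := n * (n + 1) + 1) hε0 hε1 ht0.le fun k hk => by
    have hstep := sum_nsz_eq_succ_le (L := L) hn hhn hL hβ hε (k := k) (by omega)
    simp only [t, sum_filter_le_succ]
    nlinarith [show 0 ≤ t k from sum_nonneg fun σ _ => (Real.exp_pos _).le]
  linarith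

end Weights

section Valley

variable {L : ℕ} [NeZero L]

omit [NeZero L] in
lemma card_rect_le (a : Site L) (s t : ℕ) : #(rect L a s t) ≤ s * t :=
  card_image_le.trans (by simp)

lemma nsz_le_of_mem_valleyM {n : ℕ} {σ : Cfg L} (hσ : σ ∈ valleyM L n) :
    Nsz L σ ≤ n * (n + 1) + 1 := by
  rcases hσ with hN | ⟨S, z, ⟨a, hS⟩, -, hA, -⟩
  · exact Nat.le_succ_of_le hN
  · have hcard : #S ≤ n * (n + 1) := by
      rcases hS with rfl | rfl
      · exact card_rect_le a _ _
      · exact (card_rect_le a _ _).trans_eq (mul_comm _ _)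
    rw [Nsz, hA]
    exact (card_insert_le z S).trans (by omega)

lemma sum_valleyM_le (h β : ℝ) (n : ℕ) :
    (∑ σ : Cfg L, if σ ∈ valleyM L n ∧ σ ≠ cminus L
      then Real.exp (-β * (ham L h σ - ham L h (cminus L))) else 0) ≤
    ∑ σ : Cfg L with σ ≠ cminus L ∧ Nsz L σ ≤ n * (n + 1) + 1, relWeight h β σ := by
  rw [← sum_filter]
  refine sum_le_sum_of_subset_of_nonneg (fun σ hσ => ?_) fun σ _ _ => (Real.exp_pos _).le
  simp only [mem_filter] at hσ ⊢
  exact ⟨hσ.1, hσ.2.2, nsz_le_of_mem_valleyM hσ.2.1⟩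

end Valley

lemma one_le_n0 {h : ℝ} (h0 : 0 < h) (h2 : h < 2) : 1 ≤ n0 h :=
  Nat.le_floor (by rw [Nat.cast_one, le_div_iff₀ h0]; linarith)

lemma mul_n0_lt_two {h : ℝ} (h0 : 0 < h) (hirr : ∀ m : ℤ, (2 : ℝ) / h ≠ (m : ℝ)) :
    h * n0 h < 2 := by
  have hle : (n0 h : ℝ) ≤ 2 / h := Nat.floor_le (by positivity)
  have hne : (n0 h : ℝ) ≠ 2 / h := fun heq => hirr (n0 h) (by rw [← heq]; norm_cast)
  have := lt_of_le_of_ne hle hne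
  rwa [lt_div_iff₀ h0, mul_comm] at this

end BC

/-- Lemma p74 : the Gibbs measure of the valley of `-1`, relative to the weight of `-1`,
is bounded by `C₀ |Λ_L| e^{-2β}`. -/
theorem stmt_3 (h : ℝ) (h0 : 0 < h) (h2 : h < 2)
    (hirr : ∀ m : ℤ, (2 : ℝ) / h ≠ (m : ℝ)) :
    ∃ C0 : ℝ, 0 < C0 ∧ ∀ β : ℝ, C0 ≤ β → ∀ (L : ℕ) [NeZero L],
      2 * (BC.n0 h + 2) ≤ L → (L : ℝ) ^ 2 * Real.exp (-2 * β) ≤ 1 / 2 →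
      (∑ σ : BC.Cfg L,
        if σ ∈ BC.valleyM L (BC.n0 h) ∧ σ ≠ BC.cminus L
        then Real.exp (-β * (BC.ham L h σ - BC.ham L h (BC.cminus L))) else 0)
      ≤ C0 * (L : ℝ) ^ 2 * Real.exp (-2 * β) := by
  set n := BC.n0 h
  set K := n * (n + 1) + 1
  set M : ℝ := 3 ^ ((2 * K + 1) ^ 2)
  set δ := 2 / (n : ℝ) - h
  have hn := BC.one_le_n0 h0 h2
  have hhn := BC.mul_n0_lt_two h0 hirr
  have hδ : 0 < δ := by rw [sub_pos, lt_div_iff₀ (by exact_mod_cast hn)]; linarith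
  have hlogM : 0 ≤ Real.log M := Real.log_nonneg (one_le_pow₀ (by norm_num))
  refine ⟨K * 2 ^ K + Real.log M / δ + 1, by positivity, fun β hβ L _ hL hLβ => ?_⟩
  have hβ0 : 0 ≤ β := le_trans (by positivity) hβ
  have hMβ : Real.log M ≤ δ * β := by
    rw [← div_le_iff₀' hδ]
    linarith [show (0 : ℝ) ≤ K * 2 ^ K by positivity]
  have hε : (L : ℝ) ^ 2 * M * Real.exp (-β * (2 + δ)) ≤ L ^ 2 * Real.exp (-2 * β) := by
    rw [mul_assoc]
    gcongr
    exact mul_exp_le_exp_of_log_le (by positivity) hMβ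
  calc _ ≤ L ^ 2 * Real.exp (-2 * β) * K * 2 ^ K :=
        (BC.sum_valleyM_le h β n).trans
          (BC.sum_relWeight_le hn hhn (by omega) hβ0 hε (by linarith))
    _ ≤ (K * 2 ^ K + Real.log M / δ + 1) * L ^ 2 * Real.exp (-2 * β) := by
      have : (0 : ℝ) ≤ Real.log M / δ + 1 := by positivity
      nlinarith [show (0 : ℝ) ≤ L ^ 2 * Real.exp (-2 * β) by positivity]
end
end

section
/- Assume 0 < h < 1 and 2/h ∉ ℤ, set n₀ = ⌊2/h⌋, and let L : (0,∞) → ℕ satisfy L(β) ≥ 2(n₀+2) for all β, lim_{β→∞} L(β)·( e^{−[(n₀+1)h−2]β} + e^{−hβ} ) = 0 and lim_{β→∞} L(β)⁴·e^{−(2−h)β} = 0. For each β, working on Ω_{L(β)}: lim_{β→∞} Cap_β({+1}, {-1, 0}) / Cap_β({0}, {-1, +1}) = 1. -/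
/-!
The configuration `-1` has energy `hL²`, so every transition into or out of it has weight at
most `e^{-βhL²}`; cutting the chain at `-1` costs at most `2L²e^{-βhL²}`. By the union bound and
monotonicity of capacities, the two capacities therefore differ by at most `2L²e^{-βhL²}`.
On the other hand, filling the torus with `+1`-spins row by row leads from `0` to `+1` through
configurations of energy at most `4L`, so Cauchy–Schwarz along this path gives
`Cap(0, {-1, +1}) ≥ e^{-4Lβ} / (2L²)`. Since `hL ≥ 2h(n₀ + 2) > 4 + 2h`, the relative error is at
most `4L⁴e^{-(2-h)β}`.
-/

open Classical Finset Filter Topology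

noncomputable section

namespace BC

open Real

section Capacity

variable {L : ℕ}

def IsTestFn (A B : Set (Cfg L)) (f : Cfg L → ℝ) : Prop :=
  (∀ σ, 0 ≤ f σ ∧ f σ ≤ 1) ∧ (∀ σ ∈ A, f σ = 1) ∧ (∀ σ ∈ B, f σ = 0)

lemma isTestFn_indicator {A B : Set (Cfg L)} (hAB : Disjoint A B) :
    IsTestFn A B (A.indicator 1) := by
  refine ⟨fun σ => ?_, fun σ hσ => by simp [hσ],
    fun σ hσ => by simp [hAB.notMem_of_mem_right hσ]⟩
  by_cases hσ : σ ∈ A <;> simp [hσ]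

lemma IsTestFn.one_sub {A B : Set (Cfg L)} {f : Cfg L → ℝ} (hf : IsTestFn A B f) :
    IsTestFn B A (fun σ => 1 - f σ) :=
  ⟨fun σ => ⟨by linarith [(hf.1 σ).2], by linarith [(hf.1 σ).1]⟩,
    fun σ hσ => by simp [hf.2.2 σ hσ], fun σ hσ => by simp [hf.2.1 σ hσ]⟩

lemma IsTestFn.min {A B C : Set (Cfg L)} {f g : Cfg L → ℝ} (hf : IsTestFn A B f)
    (hg : IsTestFn A C g) : IsTestFn A (B ∪ C) (fun σ => min (f σ) (g σ)) := by
  refine ⟨fun σ => ⟨le_min (hf.1 σ).1 (hg.1 σ).1, min_le_of_left_le (hf.1 σ).2⟩,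
    fun σ hσ => by simp [hf.2.1 σ hσ, hg.2.1 σ hσ], ?_⟩
  rintro σ (hσ | hσ)
  · simpa [hf.2.2 σ hσ] using (hg.1 σ).1
  · simpa [hg.2.2 σ hσ] using (hf.1 σ).1

variable [NeZero L] {h β : ℝ}

lemma capa_eq_sInf_image (A B : Set (Cfg L)) :
    capa L h β A B = sInf (dirForm L h β '' {f | IsTestFn A B f}) := by
  simp only [capa, IsTestFn, Set.image, Set.mem_ofPred_eq, and_assoc, eq_comm]

lemma dirForm_nonneg (f : Cfg L → ℝ) : 0 ≤ dirForm L h β f := by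
  unfold dirForm gw
  positivity

lemma dirForm_one_sub (f : Cfg L → ℝ) :
    dirForm L h β (fun σ => 1 - f σ) = dirForm L h β f := by
  simp only [dirForm]
  congr 1
  exact Finset.sum_congr rfl fun σ _ => Finset.sum_congr rfl fun x _ => by ring

lemma sq_min_sub_min_le (a b c d : ℝ) :
    (min a b - min c d) ^ 2 ≤ (a - c) ^ 2 + (b - d) ^ 2 := by
  have key := abs_min_sub_min_le_max a b c d
  rw [← sq_abs (min a b - min c d), ← sq_abs (a - c), ← sq_abs (b - d)]
  rcases le_total |a - c| |b - d| with hle | hle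
  · rw [max_eq_right hle] at key
    nlinarith [abs_nonneg (min a b - min c d)]
  · rw [max_eq_left hle] at key
    nlinarith [abs_nonneg (min a b - min c d)]

lemma dirForm_min_le (f g : Cfg L → ℝ) :
    dirForm L h β (fun σ => min (f σ) (g σ)) ≤ dirForm L h β f + dirForm L h β g := by
  simp only [dirForm, ← mul_add, ← Finset.sum_add_distrib]
  refine mul_le_mul_of_nonneg_left (Finset.sum_le_sum fun σ _ => Finset.sum_le_sum fun x _ => ?_)
    (by norm_num)
  have hu := sq_min_sub_min_le (f (flipUp L σ x)) (g (flipUp L σ x)) (f σ) (g σ)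
  have hd := sq_min_sub_min_le (f (flipDown L σ x)) (g (flipDown L σ x)) (f σ) (g σ)
  have wu : 0 ≤ min (gw L h β σ) (gw L h β (flipUp L σ x)) := by unfold gw; positivity
  have wd : 0 ≤ min (gw L h β σ) (gw L h β (flipDown L σ x)) := by unfold gw; positivity
  nlinarith [mul_le_mul_of_nonneg_left hu wu, mul_le_mul_of_nonneg_left hd wd]

lemma capa_le_dirForm {A B : Set (Cfg L)} {f : Cfg L → ℝ} (hf : IsTestFn A B f) :
    capa L h β A B ≤ dirForm L h β f := by
  rw [capa_eq_sInf_image]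
  exact csInf_le ⟨0, by rintro _ ⟨g, -, rfl⟩; exact dirForm_nonneg g⟩ ⟨f, hf, rfl⟩

lemma le_capa {A B : Set (Cfg L)} (hAB : Disjoint A B) {c : ℝ}
    (hc : ∀ f, IsTestFn A B f → c ≤ dirForm L h β f) : c ≤ capa L h β A B := by
  rw [capa_eq_sInf_image]
  exact le_csInf ⟨_, _, isTestFn_indicator hAB, rfl⟩
    (by rintro _ ⟨f, hf, rfl⟩; exact hc f hf)

lemma capa_comm (A B : Set (Cfg L)) : capa L h β A B = capa L h β B A := by
  have key : ∀ A B : Set (Cfg L), dirForm L h β '' {f | IsTestFn A B f} ⊆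
      dirForm L h β '' {f | IsTestFn B A f} := by
    rintro A B _ ⟨f, hf, rfl⟩
    exact ⟨_, hf.one_sub, dirForm_one_sub f⟩
  rw [capa_eq_sInf_image, capa_eq_sInf_image, (key A B).antisymm (key B A)]

lemma capa_mono_right {A B B' : Set (Cfg L)} (hBB' : B ⊆ B') (hAB' : Disjoint A B') :
    capa L h β A B ≤ capa L h β A B' :=
  le_capa hAB' fun _ hf =>
    capa_le_dirForm ⟨hf.1, hf.2.1, fun σ hσ => hf.2.2 σ (hBB' hσ)⟩

lemma capa_union_le {A B C : Set (Cfg L)} (hAB : Disjoint A B) (hAC : Disjoint A C) :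
    capa L h β A (B ∪ C) ≤ capa L h β A B + capa L h β A C := by
  have key : ∀ f, IsTestFn A B f →
      capa L h β A (B ∪ C) - dirForm L h β f ≤ capa L h β A C :=
    fun f hf => le_capa hAC fun g hg => by
      linarith [capa_le_dirForm (h := h) (β := β) (hf.min hg),
        dirForm_min_le (h := h) (β := β) f g]
  have : capa L h β A (B ∪ C) - capa L h β A C ≤ capa L h β A B :=
    le_capa hAB fun f hf => by linarith [key f hf]
  linarith

end Capacity

section Cut

variable {L : ℕ} [NeZero L] {h β : ℝ}

def flipUpEquiv (x : Site L) : Cfg L ≃ Cfg L where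
  toFun σ := flipUp L σ x
  invFun σ := flipDown L σ x
  left_inv σ := by ext y; by_cases hy : y = x <;> simp [flipUp, flipDown, hy]
  right_inv σ := by ext y; by_cases hy : y = x <;> simp [flipUp, flipDown, hy]

lemma card_site : Fintype.card (Site L) = L * L := by
  simp [ZMod.card]

lemma sum_indicator_singleton (m : Cfg L) :
    ∑ σ : Cfg L, ({m} : Set (Cfg L)).indicator (1 : Cfg L → ℝ) σ = 1 := by
  simp [Set.indicator_apply]

lemma min_gw_mul_sq_indicator_le (m σ τ : Cfg L) :
    min (gw L h β σ) (gw L h β τ) *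
        (({m} : Set (Cfg L)).indicator 1 τ - ({m} : Set (Cfg L)).indicator 1 σ) ^ 2 ≤
      gw L h β m * (({m} : Set (Cfg L)).indicator 1 σ + ({m} : Set (Cfg L)).indicator 1 τ) := by
  have hσ0 : 0 < gw L h β σ := exp_pos _
  have hτ0 : 0 < gw L h β τ := exp_pos _
  by_cases hσ : σ = m <;> by_cases hτ : τ = m <;> subst_vars <;> simp [*]

lemma dirForm_indicator_singleton_le (m : Cfg L) :
    dirForm L h β (({m} : Set (Cfg L)).indicator 1) ≤ 2 * (L : ℝ) ^ 2 * gw L h β m := by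
  set χ : Cfg L → ℝ := ({m} : Set (Cfg L)).indicator 1
  have hsum : ∀ x : Site L, ∑ σ : Cfg L, (gw L h β m * (χ σ + χ (flipUp L σ x)) +
      gw L h β m * (χ σ + χ (flipDown L σ x))) = 4 * gw L h β m := by
    intro x
    have hone : ∑ σ, χ σ = 1 := sum_indicator_singleton m
    have hup : ∑ σ, χ (flipUp L σ x) = 1 :=
      ((flipUpEquiv x).sum_comp χ).trans (sum_indicator_singleton m)
    have hdown : ∑ σ, χ (flipDown L σ x) = 1 :=
      ((flipUpEquiv x).symm.sum_comp χ).trans (sum_indicator_singleton m)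
    simp only [← mul_add, ← Finset.mul_sum, Finset.sum_add_distrib, hup, hdown, hone]
    ring
  calc dirForm L h β χ
      ≤ 1 / 2 * ∑ σ : Cfg L, ∑ x : Site L, (gw L h β m * (χ σ + χ (flipUp L σ x)) +
          gw L h β m * (χ σ + χ (flipDown L σ x))) := by
        unfold dirForm
        refine mul_le_mul_of_nonneg_left
          (Finset.sum_le_sum fun σ _ => Finset.sum_le_sum fun x _ => ?_) (by norm_num)
        exact add_le_add (min_gw_mul_sq_indicator_le m σ _) (min_gw_mul_sq_indicator_le m σ _)
    _ = 2 * (L : ℝ) ^ 2 * gw L h β m := by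
        rw [Finset.sum_comm, Finset.sum_congr rfl fun x _ => hsum x, Finset.sum_const,
          Finset.card_univ, card_site]
        ring

lemma ham_cminus : ham L h (cminus L) = h * (L : ℝ) ^ 2 := by
  simp [ham, cminus, sval, sq]

lemma capa_singleton_right_le {A : Set (Cfg L)} {m : Cfg L} (hm : m ∉ A) :
    capa L h β A {m} ≤ 2 * (L : ℝ) ^ 2 * gw L h β m := by
  rw [capa_comm]
  exact (capa_le_dirForm (isTestFn_indicator (Set.disjoint_singleton_left.2 hm))).trans
    (dirForm_indicator_singleton_le m)

lemma capa_le_capa_add {a b m : Cfg L} (hab : a ≠ b) (ham : a ≠ m) (hbm : b ≠ m) :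
    capa L h β {a} {m, b} ≤ 2 * (L : ℝ) ^ 2 * gw L h β m + capa L h β {b} {m, a} := by
  rw [Set.insert_eq m {b}]
  refine (capa_union_le (by simpa using ham) (by simpa using hab)).trans (add_le_add ?_ ?_)
  · exact capa_singleton_right_le (by simpa using ham.symm)
  · rw [capa_comm]
    exact capa_mono_right (by simp) (by simp [hbm, hab.symm])

end Cut

section Path

variable {L : ℕ} [NeZero L] {h β : ℝ}

lemma sq_sub_le_card_mul_sum_sq_sub (u : ℕ → ℝ) (N : ℕ) :
    (u N - u 0) ^ 2 ≤ N * ∑ k ∈ Finset.range N, (u (k + 1) - u k) ^ 2 := by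
  have h := sq_sum_le_card_mul_sum_sq (s := Finset.range N) (f := fun k => u (k + 1) - u k)
  rwa [Finset.sum_range_sub, Finset.card_range] at h

lemma sum_path_le_two_mul_dirForm {N : ℕ} {γ : ℕ → Cfg L} {s : ℕ → Site L}
    (hinj : Set.InjOn γ (Finset.range N))
    (hstep : ∀ k < N, flipUp L (γ k) (s k) = γ (k + 1)) (f : Cfg L → ℝ) :
    ∑ k ∈ Finset.range N, min (gw L h β (γ k)) (gw L h β (γ (k + 1))) *
      (f (γ (k + 1)) - f (γ k)) ^ 2 ≤ 2 * dirForm L h β f := by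
  set F : Cfg L → ℝ := fun σ => ∑ x : Site L,
    (min (gw L h β σ) (gw L h β (flipUp L σ x)) * (f (flipUp L σ x) - f σ) ^ 2 +
     min (gw L h β σ) (gw L h β (flipDown L σ x)) * (f (flipDown L σ x) - f σ) ^ 2)
  have hterm : ∀ σ x, 0 ≤ min (gw L h β σ) (gw L h β (flipUp L σ x)) *
      (f (flipUp L σ x) - f σ) ^ 2 +
      min (gw L h β σ) (gw L h β (flipDown L σ x)) * (f (flipDown L σ x) - f σ) ^ 2 := by
    intro σ x; unfold gw; positivity
  calc _ ≤ ∑ k ∈ Finset.range N, F (γ k) := by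
        refine Finset.sum_le_sum fun k hk => ?_
        rw [← hstep k (Finset.mem_range.1 hk)]
        refine le_trans ?_ (Finset.single_le_sum (fun x _ => hterm (γ k) x)
          (Finset.mem_univ (s k)))
        have : 0 ≤ min (gw L h β (γ k)) (gw L h β (flipDown L (γ k) (s k))) := by
          unfold gw; positivity
        simp only [le_add_iff_nonneg_right]
        positivity
    _ ≤ ∑ σ, F σ := by
        rw [← Finset.sum_image hinj]
        exact Finset.sum_le_sum_of_subset_of_nonneg (Finset.subset_univ _)
          fun σ _ _ => Finset.sum_nonneg fun x _ => hterm σ x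
    _ = 2 * dirForm L h β f := by
        unfold dirForm
        ring

lemma le_dirForm_of_path {w : ℝ} (hw0 : 0 ≤ w) {N : ℕ} {γ : ℕ → Cfg L}
    {s : ℕ → Site L}
    (hinj : Set.InjOn γ (Finset.range N))
    (hstep : ∀ k < N, flipUp L (γ k) (s k) = γ (k + 1))
    (hw : ∀ k ≤ N, w ≤ gw L h β (γ k)) (f : Cfg L → ℝ) :
    w * (f (γ N) - f (γ 0)) ^ 2 / (2 * N) ≤ dirForm L h β f := by
  rcases N.eq_zero_or_pos with rfl | hN
  · simpa using dirForm_nonneg f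
  have hCS := sq_sub_le_card_mul_sum_sq_sub (fun k => f (γ k)) N
  have hpath := sum_path_le_two_mul_dirForm (h := h) (β := β) hinj hstep f
  calc w * (f (γ N) - f (γ 0)) ^ 2 / (2 * N)
      ≤ w * (N * ∑ k ∈ Finset.range N, (f (γ (k + 1)) - f (γ k)) ^ 2) / (2 * N) := by
        gcongr
    _ = 1 / 2 * ∑ k ∈ Finset.range N, w * (f (γ (k + 1)) - f (γ k)) ^ 2 := by
        rw [← Finset.mul_sum]
        field_simp
    _ ≤ 1 / 2 * ∑ k ∈ Finset.range N, min (gw L h β (γ k)) (gw L h β (γ (k + 1))) *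
          (f (γ (k + 1)) - f (γ k)) ^ 2 := by
        gcongr with k hk
        have hk := Finset.mem_range.1 hk
        exact le_min (hw k hk.le) (hw (k + 1) hk)
    _ ≤ dirForm L h β f := by linarith

end Path

section LexPath

variable {L : ℕ}

def siteIdx (y : Site L) : ℕ := y.2.val * L + y.1.val

def lexSite (k : ℕ) : Site L := (((k % L : ℕ) : ZMod L), ((k / L : ℕ) : ZMod L))

/-- The first `k` sites of the row-by-row enumeration carry spin `+1` (encoded `2`),
the others spin `0` (encoded `1`). -/
def lexCfg (k : ℕ) : Cfg L := fun y => if siteIdx y < k then 2 else 1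

lemma lexCfg_zero : lexCfg 0 = czero L := rfl

lemma sq_sval_lexCfg_sub_le (k : ℕ) (y y' : Site L) (P : Prop) [Decidable P]
    (hP : ¬P → (siteIdx y' < k ↔ siteIdx y < k)) :
    ((sval (lexCfg k y') : ℝ) - sval (lexCfg k y)) ^ 2 ≤ if P then 1 else 0 := by
  by_cases hp : P
  · by_cases hy' : siteIdx y' < k <;> by_cases hy : siteIdx y < k <;>
      simp [lexCfg, sval, hp, hy, hy']
  · simp [lexCfg, hp, hP hp]

variable [NeZero L]

lemma siteIdx_lt (y : Site L) : siteIdx y < L * L := by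
  have h1 := ZMod.val_lt y.1
  have h2 : (y.2.val + 1) * L ≤ L * L := Nat.mul_le_mul_right L (ZMod.val_lt y.2)
  unfold siteIdx
  linarith

lemma siteIdx_lexSite {k : ℕ} (hk : k < L * L) : siteIdx (lexSite k : Site L) = k := by
  have hL := NeZero.pos L
  have hdiv : k / L < L := (Nat.div_lt_iff_lt_mul hL).2 hk
  simp only [siteIdx, lexSite, ZMod.val_cast_of_lt hdiv, ZMod.val_cast_of_lt (Nat.mod_lt k hL)]
  exact Nat.div_add_mod' k L

lemma siteIdx_injective : Function.Injective (siteIdx : Site L → ℕ) := by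
  intro y y' he
  have hL := NeZero.pos L
  have h1 := ZMod.val_lt y.1
  have h1' := ZMod.val_lt y'.1
  have hmod : y.1.val = y'.1.val := by
    simpa [siteIdx, Nat.mul_add_mod_self_right, Nat.mod_eq_of_lt h1, Nat.mod_eq_of_lt h1'] using
      congrArg (· % L) he
  have hdiv : y.2.val = y'.2.val := by
    have := congrArg (· / L) he
    simp only [siteIdx, Nat.add_comm (_ * L), Nat.add_mul_div_right _ _ hL,
      Nat.div_eq_of_lt h1, Nat.div_eq_of_lt h1'] at this
    omega
  exact Prod.ext (ZMod.val_injective L hmod) (ZMod.val_injective L hdiv)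

lemma lexCfg_card : lexCfg (L * L) = cplus L := by
  funext y
  simp [lexCfg, cplus, siteIdx_lt y]

lemma flipUp_lexCfg {k : ℕ} (hk : k < L * L) :
    flipUp L (lexCfg k) (lexSite k) = lexCfg (k + 1) := by
  funext y
  by_cases hy : y = lexSite k
  · subst hy
    simp [flipUp, lexCfg, siteIdx_lexSite hk]
  · have hne : siteIdx y ≠ k := fun he =>
      hy (siteIdx_injective (he.trans (siteIdx_lexSite hk).symm))
    simp only [flipUp, Function.update_of_ne hy, lexCfg]
    congr 1
    exact propext (by omega)

lemma lexCfg_injOn : Set.InjOn (lexCfg : ℕ → Cfg L) (Finset.range (L * L)) := by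
  have key : ∀ {k k'}, k < k' → k < L * L → lexCfg k ≠ (lexCfg k' : Cfg L) := by
    intro k k' hlt hk he
    have := congrFun he (lexSite k)
    simp [lexCfg, siteIdx_lexSite hk, hlt] at this
  intro k hk k' hk' he
  simp only [Finset.coe_range, Set.mem_Iio] at hk hk'
  rcases lt_trichotomy k k' with hlt | heq | hgt
  · exact absurd he (key hlt hk)
  · exact heq
  · exact absurd he.symm (key hgt hk')

lemma siteIdx_lt_iff_of_row_ne {k : ℕ} {y : Site L} (hy : y.2.val ≠ k / L) :
    siteIdx y < k ↔ y.2.val < k / L := by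
  have hL := NeZero.pos L
  have hc := ZMod.val_lt y.1
  unfold siteIdx
  rcases lt_or_gt_of_ne hy with hlt | hgt
  · have := (Nat.le_div_iff_mul_le hL).1 hlt
    rw [Nat.succ_mul] at this
    exact iff_of_true (by omega) hlt
  · have := (Nat.div_lt_iff_lt_mul hL).1 hgt
    exact iff_of_false (by omega) (by omega)

lemma sum_row_indicator_le (c : ℕ) :
    ∑ y : Site L, (if y.2.val = c then (1 : ℝ) else 0) ≤ L := by
  have hcol : ∀ a : ZMod L, ∑ b : ZMod L, (if b.val = c then (1 : ℝ) else 0) ≤ 1 := by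
    intro a
    rw [Finset.sum_boole, Nat.cast_le_one]
    exact Finset.card_le_one.2 fun b hb b' hb' =>
      ZMod.val_injective L ((Finset.mem_filter.1 hb).2.trans (Finset.mem_filter.1 hb').2.symm)
  rw [Fintype.sum_prod_type]
  simpa using Finset.sum_le_sum fun a (_ : a ∈ Finset.univ) => hcol a

lemma sq_sval_lexCfg_horizontal_le (k : ℕ) (y : Site L) :
    ((sval (lexCfg k (y + (1, 0))) : ℝ) - sval (lexCfg k y)) ^ 2 ≤
      if y.2.val = k / L then 1 else 0 := by
  refine sq_sval_lexCfg_sub_le k _ _ _ fun hy => ?_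
  have hrow : (y + (1, 0)).2 = y.2 := by simp
  rw [siteIdx_lt_iff_of_row_ne hy, siteIdx_lt_iff_of_row_ne (hrow ▸ hy), hrow]

/-- A broken vertical bond starts in the row of the cursor `k / L`, in the row below it,
or in row `L - 1`, where it crosses the seam of the torus. -/
lemma sq_sval_lexCfg_vertical_le (hL : 2 ≤ L) (k : ℕ) (y : Site L) :
    ((sval (lexCfg k (y + (0, 1))) : ℝ) - sval (lexCfg k y)) ^ 2 ≤
      (if y.2.val = k / L then 1 else 0) + (if y.2.val = k / L - 1 then 1 else 0) +
        (if y.2.val = L - 1 then 1 else 0) := by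
  have : Fact (1 < L) := ⟨hL⟩
  refine (sq_sval_lexCfg_sub_le k _ _
    (y.2.val = k / L ∨ y.2.val = k / L - 1 ∨ y.2.val = L - 1) fun hy => ?_).trans
    (by split_ifs <;> simp_all)
  simp only [not_or] at hy
  have hrow : (y + (0, 1)).2.val = y.2.val + 1 := by
    have := ZMod.val_lt y.2
    rw [Prod.snd_add, ZMod.val_add_of_lt (a := y.2) (b := 1) (by rw [ZMod.val_one]; omega),
      ZMod.val_one]
  rw [siteIdx_lt_iff_of_row_ne hy.1, siteIdx_lt_iff_of_row_ne (by omega), hrow]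
  omega

lemma ham_lexCfg_le {h : ℝ} (hh : 0 ≤ h) (hL : 2 ≤ L) (k : ℕ) :
    ham L h (lexCfg k) ≤ 4 * L := by
  have hfield : 0 ≤ ∑ y : Site L, (sval (lexCfg k y) : ℝ) :=
    Finset.sum_nonneg fun y _ => by by_cases hy : siteIdx y < k <;> simp [lexCfg, sval, hy]
  have hbonds : ∑ y : Site L,
      (((sval (lexCfg k (y + (1, 0))) : ℝ) - sval (lexCfg k y)) ^ 2 +
       ((sval (lexCfg k (y + (0, 1))) : ℝ) - sval (lexCfg k y)) ^ 2) ≤ 4 * L := by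
    calc _ ≤ ∑ y : Site L, ((if y.2.val = k / L then (1 : ℝ) else 0) +
          ((if y.2.val = k / L then 1 else 0) + (if y.2.val = k / L - 1 then 1 else 0) +
            (if y.2.val = L - 1 then 1 else 0))) :=
          Finset.sum_le_sum fun y _ => add_le_add (sq_sval_lexCfg_horizontal_le k y)
            (sq_sval_lexCfg_vertical_le hL k y)
      _ ≤ L + (L + L + L) := by
          simp only [Finset.sum_add_distrib]
          gcongr <;> exact sum_row_indicator_le _
      _ = 4 * L := by ring
  unfold ham
  nlinarith

end LexPath

section Ratio

variable {L : ℕ}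

lemma cminus_ne_czero : cminus L ≠ czero L := fun he => by
  simpa [cminus, czero] using congrFun he 0

lemma cminus_ne_cplus : cminus L ≠ cplus L := fun he => by
  simpa [cminus, cplus] using congrFun he 0

lemma czero_ne_cplus : czero L ≠ cplus L := fun he => by
  simpa [czero, cplus] using congrFun he 0

variable [NeZero L] {h β : ℝ}

lemma gw_cminus : gw L h β (cminus L) = exp (-β * (h * (L : ℝ) ^ 2)) := by
  rw [gw, ham_cminus]

lemma capa_czero_ge (hβ : 0 ≤ β) (hh : 0 ≤ h) (hL : 2 ≤ L) :
    exp (-β * (4 * L)) / (2 * (L : ℝ) ^ 2) ≤ capa L h β {czero L} {cminus L, cplus L} := by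
  refine le_capa (by simp [cminus_ne_czero.symm, czero_ne_cplus]) fun f hf => ?_
  have hw : ∀ k ≤ L * L, exp (-β * (4 * L)) ≤ gw L h β (lexCfg k) := fun k _ =>
    exp_le_exp.2 (by nlinarith [ham_lexCfg_le hh hL k])
  have := le_dirForm_of_path (exp_pos _).le (lexCfg_injOn (L := L))
    (fun k hk => flipUp_lexCfg hk) hw f
  rw [lexCfg_card, lexCfg_zero, hf.2.2 _ (by simp), hf.2.1 _ rfl] at this
  convert this using 1
  push_cast
  ring

lemma abs_capa_div_capa_sub_one_le (hβ : 0 ≤ β) (hh : 0 ≤ h) (hL : 2 ≤ L)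
    (hhL : 2 - h + 4 * L ≤ h * (L : ℝ) ^ 2) :
    |capa L h β {cplus L} {cminus L, czero L} / capa L h β {czero L} {cminus L, cplus L} - 1| ≤
      4 * ((L : ℝ) ^ 4 * exp (-(2 - h) * β)) := by
  set Cn := capa L h β {cplus L} {cminus L, czero L}
  set Cd := capa L h β {czero L} {cminus L, cplus L}
  have hn := capa_le_capa_add (L := L) (h := h) (β := β) czero_ne_cplus.symm cminus_ne_cplus.symm
    cminus_ne_czero.symm
  have hd := capa_le_capa_add (L := L) (h := h) (β := β) czero_ne_cplus cminus_ne_czero.symm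
    cminus_ne_cplus.symm
  have hCd := capa_czero_ge hβ hh hL
  have hCd0 : 0 < Cd := lt_of_lt_of_le (by positivity) hCd
  rw [div_sub_one hCd0.ne', abs_div, abs_of_pos hCd0, div_le_iff₀ hCd0]
  calc |Cn - Cd| ≤ 2 * (L : ℝ) ^ 2 * exp (-β * (h * (L : ℝ) ^ 2)) := by
        rw [← gw_cminus]
        exact abs_sub_le_iff.2 ⟨by linarith, by linarith⟩
    _ ≤ 2 * (L : ℝ) ^ 2 * (exp (-(2 - h) * β) * exp (-β * (4 * L))) := by
        rw [← exp_add]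
        gcongr
        nlinarith
    _ = 4 * ((L : ℝ) ^ 4 * exp (-(2 - h) * β)) *
          (exp (-β * (4 * L)) / (2 * (L : ℝ) ^ 2)) := by
        field_simp
        ring
    _ ≤ 4 * ((L : ℝ) ^ 4 * exp (-(2 - h) * β)) * Cd := by gcongr

end Ratio

end BC

/-- Lemma (500) : `cap(+1, {-1, 0}) / cap(0, {-1, +1}) → 1`. -/
theorem stmt_18 (h : ℝ) (h0 : 0 < h)
    (L : ℝ → ℕ) (hL : ∀ β : ℝ, 2 * (BC.n0 h + 2) ≤ L β)
    (hlim2 : Filter.Tendsto (fun β : ℝ => (L β : ℝ) ^ 4 * Real.exp (-(2 - h) * β))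
      Filter.atTop (nhds 0)) :
    Filter.Tendsto (fun β : ℝ =>
      letI : NeZero (L β) := ⟨by have := hL β; omega⟩
      BC.capa (L β) h β {BC.cplus (L β)} {BC.cminus (L β), BC.czero (L β)} /
        BC.capa (L β) h β {BC.czero (L β)} {BC.cminus (L β), BC.cplus (L β)})
      Filter.atTop (nhds 1) := by
  have hn0 : 2 < h * (BC.n0 h + 1) := by
    have := Nat.lt_floor_add_one (2 / h)
    rw [div_lt_iff₀ h0] at this
    unfold BC.n0
    linarith
  rw [← tendsto_sub_nhds_zero_iff]
  refine squeeze_zero_norm' (a := fun β => 4 * ((L β : ℝ) ^ 4 * Real.exp (-(2 - h) * β))) ?_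
    (by simpa using hlim2.const_mul 4)
  filter_upwards [eventually_ge_atTop 0] with β hβ
  have : NeZero (L β) := ⟨by have := hL β; omega⟩
  have hLβ : 2 * ((BC.n0 h : ℝ) + 2) ≤ L β := by exact_mod_cast hL β
  have hhL : 2 - h + 4 * L β ≤ h * (L β : ℝ) ^ 2 := by nlinarith
  rw [Real.norm_eq_abs]
  exact BC.abs_capa_div_capa_sub_one_le hβ h0.le (by have := hL β; omega) hhL
end
end
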